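/- Fix positive integers n, m, k with m ≥ 2. There exists a real number L(n,m,k), depending only on n, m, and k, with the following property: for any Deligne-bounded cusp sequences a_1, …, a_m : ℕ → ℂ of even weights ℓ_1, …, ℓ_m (each ℓ_i ≥ 12), if ℓ = ℓ_1 + ⋯ + ℓ_m > L(n,m,k), then |(a_1 ∗ a_2 ∗ ⋯ ∗ a_m)(n)| ≤ n^{ℓ/2 − k}. -/

import Mathlib

/-!
In the `n`-th coefficient `∑_{l₁ + ⋯ + l_m = n} ∏ aᵢ(lᵢ)` only the terms with every `lᵢ ≥ 1`
survive, since `aᵢ(0) = 0`; as `m ≥ 2`, each such `lᵢ` is then at most `n - 1`. The Deligne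
bound makes every term at most `2^m (n - 1)^{ℓ/2}`, so the coefficient is `O((n - 1)^{ℓ/2})`
with a constant depending only on `n` and `m`. Since `(n - 1)/n < 1`, this is eventually below
`n^{ℓ/2 - k}` as the weight `ℓ` grows.
-/

/-- `a : ℕ → ℂ` is a Deligne-bounded cusp sequence of weight `ℓ` if `ℓ` is an even
integer `≥ 12`, `a 0 = 0`, and `|a n| ≤ 2 n^(ℓ/2)` for all `n ≥ 1`. -/
def IsDeligneCusp (a : ℕ → ℂ) (ℓ : ℕ) : Prop :=
  Even ℓ ∧ 12 ≤ ℓ ∧ a 0 = 0 ∧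
    ∀ n : ℕ, 1 ≤ n → ‖a n‖ ≤ 2 * (n : ℝ) ^ ((ℓ : ℝ) / 2)

open Filter Finset Topology

theorem IsDeligneCusp.norm_le_of_le {a : ℕ → ℂ} {ℓ : ℕ} (ha : IsDeligneCusp a ℓ) {j N : ℕ}
    (hj : 1 ≤ j) (hjN : j ≤ N) : ‖a j‖ ≤ 2 * (N : ℝ) ^ ((ℓ : ℝ) / 2) := by
  refine (ha.2.2.2 j hj).trans ?_
  gcongr

section CuspProduct

variable {ι : Type*} [Fintype ι] {a : ι → ℕ → ℂ} {ℓ : ι → ℕ}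

theorem norm_prod_apply_le_of_sum_eq [Nontrivial ι] (ha : ∀ i, IsDeligneCusp (a i) (ℓ i))
    {f : ι → ℕ} {n : ℕ} (hf : ∑ i, f i = n) :
    ‖∏ i, a i (f i)‖ ≤ 2 ^ Fintype.card ι * ((n - 1 : ℕ) : ℝ) ^ (((∑ i, ℓ i : ℕ) : ℝ) / 2) := by
  by_cases hzero : ∃ i, f i = 0
  · obtain ⟨i, hi⟩ := hzero
    rw [prod_eq_zero (mem_univ i) (by rw [hi, (ha i).2.2.1]), norm_zero]
    positivity
  push Not at hzero
  -- Some other index carries a positive part of `n`, so no single `f i` can reach `n`.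
  have hle : ∀ i, f i ≤ n - 1 := fun i => by
    obtain ⟨j, hji⟩ := exists_ne i
    have := single_lt_sum hji (mem_univ i) (mem_univ j) (Nat.pos_of_ne_zero (hzero j))
      fun _ _ _ => Nat.zero_le _
    omega
  calc ‖∏ i, a i (f i)‖ = ∏ i, ‖a i (f i)‖ := norm_prod _ _
    _ ≤ ∏ i, 2 * ((n - 1 : ℕ) : ℝ) ^ ((ℓ i : ℝ) / 2) :=
      prod_le_prod (fun _ _ => norm_nonneg _) fun i _ =>
        (ha i).norm_le_of_le (Nat.one_le_iff_ne_zero.2 (hzero i)) (hle i)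
    _ = 2 ^ Fintype.card ι * ((n - 1 : ℕ) : ℝ) ^ (((∑ i, ℓ i : ℕ) : ℝ) / 2) := by
      rw [prod_mul_distrib, prod_const, card_univ,
        ← Real.rpow_sum_of_nonneg (Nat.cast_nonneg _) fun _ _ => by positivity]
      push_cast
      rw [sum_div]

theorem norm_coeff_prod_mk_le [Nontrivial ι] [DecidableEq ι]
    (ha : ∀ i, IsDeligneCusp (a i) (ℓ i)) (n : ℕ) :
    ‖PowerSeries.coeff n (∏ i, PowerSeries.mk (a i))‖ ≤
      #(finsuppAntidiag (univ : Finset ι) n) *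
        (2 ^ Fintype.card ι * ((n - 1 : ℕ) : ℝ) ^ (((∑ i, ℓ i : ℕ) : ℝ) / 2)) := by
  rw [PowerSeries.coeff_prod, ← nsmul_eq_mul]
  refine (norm_sum_le _ _).trans (sum_le_card_nsmul _ _ _ fun l hl => ?_)
  simp only [PowerSeries.coeff_mk]
  exact norm_prod_apply_le_of_sum_eq ha (mem_finsuppAntidiag.1 hl).1

end CuspProduct

theorem eventually_mul_rpow_le_rpow_sub {a b : ℝ} (ha : 0 ≤ a) (hab : a < b) (c k : ℝ) :
    ∀ᶠ x in atTop, c * a ^ x ≤ b ^ (x - k) := by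
  have hb : 0 < b := ha.trans_lt hab
  set r := a / b
  have hr : a = b * r := (mul_div_cancel₀ a hb.ne').symm
  have hr₀ : 0 ≤ r := div_nonneg ha hb.le
  have hr₁ : r < 1 := (div_lt_one hb).2 hab
  have hlim : Tendsto (fun x : ℝ => c * b ^ k * r ^ x) atTop (𝓝 0) := by
    simpa using (tendsto_rpow_atTop_of_base_lt_one r (by linarith) hr₁).const_mul (c * b ^ k)
  filter_upwards [hlim.eventually (gt_mem_nhds one_pos)] with x hx
  have hsplit : b ^ x = b ^ k * b ^ (x - k) := by rw [← Real.rpow_add hb, add_sub_cancel]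
  calc c * a ^ x = c * b ^ k * r ^ x * b ^ (x - k) := by
        rw [hr, Real.mul_rpow hb.le hr₀, hsplit]; ring
    _ ≤ 1 * b ^ (x - k) := by gcongr
    _ = b ^ (x - k) := one_mul _

theorem cusp_product_coeff_small_general (n m k : ℕ) (hn : 0 < n) (hm : 2 ≤ m) :
    ∃ L : ℝ, ∀ (a : Fin m → ℕ → ℂ) (ℓ : Fin m → ℕ),
      (∀ i, IsDeligneCusp (a i) (ℓ i)) → L < ((∑ i, ℓ i : ℕ) : ℝ) →
      ‖PowerSeries.coeff n (∏ i, PowerSeries.mk (a i))‖ ≤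
        (n : ℝ) ^ (((∑ i, ℓ i : ℕ) : ℝ) / 2 - k) := by
  have : Nontrivial (Fin m) := Fin.nontrivial_iff_two_le.2 hm
  have hlt : ((n - 1 : ℕ) : ℝ) < n := by exact_mod_cast Nat.sub_lt hn one_pos
  obtain ⟨L, hL⟩ := eventually_atTop.1 <| eventually_mul_rpow_le_rpow_sub (Nat.cast_nonneg _) hlt
    (#(finsuppAntidiag (univ : Finset (Fin m)) n) * 2 ^ m) k
  refine ⟨2 * L, fun a ℓ ha hℓ => ?_⟩
  calc ‖PowerSeries.coeff n (∏ i, PowerSeries.mk (a i))‖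
      ≤ #(finsuppAntidiag univ n) * 2 ^ m * ((n - 1 : ℕ) : ℝ) ^ (((∑ i, ℓ i : ℕ) : ℝ) / 2) := by
        simpa [mul_assoc] using norm_coeff_prod_mk_le ha n
    _ ≤ (n : ℝ) ^ (((∑ i, ℓ i : ℕ) : ℝ) / 2 - k) := hL _ (by linarith)

/-- For fixed positive integers `n, m, k` with `m ≥ 2` there is a bound `L(n,m,k)` such
that for any `m` Deligne-bounded cusp sequences of total weight `ℓ > L(n,m,k)`, the
`n`-th coefficient of their product (Cauchy convolution) is at most `n^(ℓ/2 - k)`. -/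
theorem cusp_product_coeff_small (n m k : ℕ) (hn : 0 < n) (hm : 2 ≤ m) (hk : 0 < k) :
    ∃ L : ℝ, ∀ (a : Fin m → ℕ → ℂ) (ℓ : Fin m → ℕ),
      (∀ i, IsDeligneCusp (a i) (ℓ i)) → L < ((∑ i, ℓ i : ℕ) : ℝ) →
      ‖PowerSeries.coeff n (∏ i, PowerSeries.mk (a i))‖ ≤
        (n : ℝ) ^ (((∑ i, ℓ i : ℕ) : ℝ) / 2 - k) :=
  cusp_product_coeff_small_general n m k hn hm
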